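/- Let $\mathbb{C}_b$ be a biphase strongly convex isotropic elasticity tensor and let $\mathbb{H}(x) = (h\, I_3 \otimes I_3 + 2k\, \mathbb{I}_{sym})\chi_{\mathbb{R}^3_-}(x)$ for real numbers $h, k$. Then for all $l, m \in \mathbb{R}^3$ and $y, z \in \mathbb{R}^3_+$ with $y \neq z$: $\int_{\mathbb{R}^3_-} \mathbb{H}\widehat{\nabla}\Gamma_{\mathbb{C}_b}(\cdot, y)l : \widehat{\nabla}\Gamma_{\mathbb{C}_b}(\cdot, z)m = \frac{d}{dt}\Big|_{t=0}\left(\Gamma_{\mathbb{C}_b + t\mathbb{H}}(y,z)m \cdot l\right)$, i.e. the derivative at $t = 0$ of the perturbed biphase fundamental solution in direction $\mathbb{H}$ is given by this bilinear expression in the unperturbed fundamental solution. -/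
import Mathlib


open Matrix MeasureTheory BigOperators Filter

/-- Frobenius product of two `3 × 3` real matrices. -/
def mdot (A B : Matrix (Fin 3) (Fin 3) ℝ) : ℝ := ∑ i, ∑ j, A i j * B i j

/-- The symmetrized gradient of a vector field. -/
noncomputable def symGrad (u : EuclideanSpace ℝ (Fin 3) → (Fin 3 → ℝ))
    (x : EuclideanSpace ℝ (Fin 3)) : Matrix (Fin 3) (Fin 3) ℝ :=
  Matrix.of fun i j =>
    (fderiv ℝ u x (EuclideanSpace.single j 1) i + fderiv ℝ u x (EuclideanSpace.single i 1) j) / 2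

/-- The lower half-space `{x : x₃ < 0}`. -/
def lowerHalf : Set (EuclideanSpace ℝ (Fin 3)) := {x | x 2 < 0}

/-- The upper half-space `{x : x₃ > 0}`. -/
def upperHalf : Set (EuclideanSpace ℝ (Fin 3)) := {x | 0 < x 2}

instance : MeasurableSpace (Matrix (Fin 3) (Fin 3) ℝ) :=
  MeasurableSpace.pi

instance : BorelSpace (Matrix (Fin 3) (Fin 3) ℝ) :=
  Pi.borelSpace

lemma mdot_smul_left (t : ℝ) (A B : Matrix (Fin 3) (Fin 3) ℝ) :
    mdot (t • A) B = t * mdot A B := by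
  simp [mdot, Finset.mul_sum, mul_assoc]

lemma mdot_sub_left (A B C : Matrix (Fin 3) (Fin 3) ℝ) :
    mdot (A - B) C = mdot A C - mdot B C := by
  simp [mdot, sub_mul, Finset.sum_sub_distrib]

lemma continuous_mdot :
    Continuous fun p : Matrix (Fin 3) (Fin 3) ℝ × Matrix (Fin 3) (Fin 3) ℝ => mdot p.1 p.2 := by
  unfold mdot; fun_prop

lemma measurable_symGrad (u : EuclideanSpace ℝ (Fin 3) → (Fin 3 → ℝ)) :
    Measurable (symGrad u) := by
  apply measurable_pi_lambda; intro i; apply measurable_pi_lambda; intro j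
  have h1 : Measurable fun x => fderiv ℝ u x (EuclideanSpace.single j 1) i :=
    (measurable_pi_apply i).comp (measurable_fderiv_apply_const ℝ u _)
  have h2 : Measurable fun x => fderiv ℝ u x (EuclideanSpace.single i 1) j :=
    (measurable_pi_apply j).comp (measurable_fderiv_apply_const ℝ u _)
  exact (h1.add h2).div_const 2

lemma measurableSet_lowerHalf : MeasurableSet lowerHalf := by
  have : Continuous fun x : EuclideanSpace ℝ (Fin 3) => x 2 := by
    exact (continuous_apply 2).comp (PiLp.continuous_ofLp 2 fun _ : Fin 3 => ℝ)
  exact measurableSet_lt this.measurable measurable_const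

lemma integrable_min_rpow :
    Integrable (fun x : EuclideanSpace ℝ (Fin 3) => min (‖x‖ ^ (-(4:ℝ))) 1) := by
  have hnr : ((Module.finrank ℝ (EuclideanSpace ℝ (Fin 3))) : ℝ) < 4 := by
    rw [finrank_euclideanSpace]; simp; norm_num
  have hint : Integrable (fun x : EuclideanSpace ℝ (Fin 3) => (16:ℝ) * (1 + ‖x‖) ^ (-(4:ℝ))) :=
    (integrable_one_add_norm hnr).const_mul 16
  refine hint.mono' ?_ (Eventually.of_forall fun x => ?_)
  · exact ((measurable_norm.pow_const _).min measurable_const).aestronglyMeasurable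
  · have hmin0 : (0:ℝ) ≤ min (‖x‖ ^ (-(4:ℝ))) 1 :=
      le_min (Real.rpow_nonneg (norm_nonneg _) _) zero_le_one
    rw [Real.norm_eq_abs, abs_of_nonneg hmin0]
    rcases le_total (‖x‖) 1 with hx | hx
    · have h2 : (2:ℝ) ^ (-(4:ℝ)) ≤ (1 + ‖x‖) ^ (-(4:ℝ)) :=
        Real.rpow_le_rpow_of_nonpos (by positivity) (by linarith) (by norm_num)
      have h16 : (2:ℝ) ^ (-(4:ℝ)) = 1/16 := by
        rw [Real.rpow_neg (by norm_num)]
        norm_num [Real.rpow_natCast 2 4]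
      calc min (‖x‖ ^ (-(4:ℝ))) 1 ≤ 1 := min_le_right _ _
        _ ≤ 16 * (1 + ‖x‖) ^ (-(4:ℝ)) := by rw [h16] at h2; linarith
    · have hxpos : (0:ℝ) < ‖x‖ := by linarith
      have h2 : ((2:ℝ) * ‖x‖) ^ (-(4:ℝ)) ≤ (1 + ‖x‖) ^ (-(4:ℝ)) :=
        Real.rpow_le_rpow_of_nonpos (by positivity) (by linarith) (by norm_num)
      have hmul : ((2:ℝ) * ‖x‖) ^ (-(4:ℝ)) = 2 ^ (-(4:ℝ)) * ‖x‖ ^ (-(4:ℝ)) :=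
        Real.mul_rpow (by norm_num) (norm_nonneg _)
      have h16 : (2:ℝ) ^ (-(4:ℝ)) = 1/16 := by
        rw [Real.rpow_neg (by norm_num)]
        norm_num [Real.rpow_natCast 2 4]
      have hnn : (0:ℝ) ≤ ‖x‖ ^ (-(4:ℝ)) := Real.rpow_nonneg (norm_nonneg _) _
      calc min (‖x‖ ^ (-(4:ℝ))) 1 ≤ ‖x‖ ^ (-(4:ℝ)) := min_le_left _ _
        _ ≤ 16 * (1 + ‖x‖) ^ (-(4:ℝ)) := by
            rw [hmul, h16] at h2; linarith


open scoped Topology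

/-- The derivative at `t = 0` of the perturbed biphase fundamental solution
`Γ_{ℂ_b + tℍ}` in the direction `ℍ = (h I₃⊗I₃ + 2k 𝕀_sym)χ_{ℝ³₋}` is given by
the interface integral
`∫_{ℝ³₋} ℍ ∇̂Γ_{ℂ_b}(·,y) l : ∇̂Γ_{ℂ_b}(·,z) m`. -/
theorem biphase_derivative_identity
    (Cp Cm : Matrix (Fin 3) (Fin 3) ℝ →ₗ[ℝ] Matrix (Fin 3) (Fin 3) ℝ)
    (h k : ℝ)
    -- `ℍ` acting on matrices on the lower half-space
    (HL : Matrix (Fin 3) (Fin 3) ℝ →ₗ[ℝ] Matrix (Fin 3) (Fin 3) ℝ)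
    (hHL : ∀ A, HL A = (h * A.trace) • (1 : Matrix (Fin 3) (Fin 3) ℝ)
      + (2 * k) • ((1 / 2 : ℝ) • (A + Aᵀ)))
    (Hmap Cb : EuclideanSpace ℝ (Fin 3) →
      Matrix (Fin 3) (Fin 3) ℝ →ₗ[ℝ] Matrix (Fin 3) (Fin 3) ℝ)
    (hHmap : ∀ x : EuclideanSpace ℝ (Fin 3), Hmap x = if x 2 < 0 then HL else 0)
    (hCb : ∀ x : EuclideanSpace ℝ (Fin 3), Cb x = if 0 < x 2 then Cp else Cm)
    -- the family of biphase fundamental solutions of `ℂ_b + tℍ`, for small `t`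
    (t0 : ℝ) (ht0 : 0 < t0)
    (Γfam : ℝ → EuclideanSpace ℝ (Fin 3) → EuclideanSpace ℝ (Fin 3) →
      Matrix (Fin 3) (Fin 3) ℝ)
    (hfund : ∀ t ∈ Set.Ioo (-t0) t0, ∀ y : EuclideanSpace ℝ (Fin 3), ∀ l : Fin 3 → ℝ,
      ∀ φ : EuclideanSpace ℝ (Fin 3) → (Fin 3 → ℝ), ContDiff ℝ (⊤ : ℕ∞) φ → HasCompactSupport φ →
        ∫ x, mdot ((Cb x + t • Hmap x) (symGrad (fun x' => (Γfam t x' y).mulVec l) x))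
          (symGrad φ x) = φ y ⬝ᵥ l)
    (hΓsym : ∀ t ∈ Set.Ioo (-t0) t0, ∀ x y, x ≠ y → Γfam t x y = (Γfam t y x)ᵀ)
    -- the identity of the preceding proposition for the pair `ℂ_b + tℍ`, `ℂ_b`
    (hdiff : ∀ t ∈ Set.Ioo (-t0) t0, ∀ (l m : Fin 3 → ℝ),
      ∀ y ∈ upperHalf, ∀ z ∈ upperHalf, y ≠ z →
        (∫ x in lowerHalf, mdot ((t • Hmap x) (symGrad (fun x' => (Γfam t x' y).mulVec l) x))
            (symGrad (fun x' => (Γfam 0 x' z).mulVec m) x))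
          = ((Γfam t y z - Γfam 0 y z).mulVec m) ⬝ᵥ l)
    -- pointwise convergence of the symmetrized gradients as `t → 0`
    (hconv : ∀ (l : Fin 3 → ℝ), ∀ y ∈ upperHalf, ∀ x ∈ lowerHalf,
      Filter.Tendsto (fun t => symGrad (fun x' => (Γfam t x' y).mulVec l) x)
        (nhds 0) (nhds (symGrad (fun x' => (Γfam 0 x' y).mulVec l) x)))
    -- the uniform integrable bound
    (Cd : ℝ)
    (hdom : ∀ t ∈ Set.Ioo (-t0) t0, ∀ (l m : Fin 3 → ℝ),
      ∀ y ∈ upperHalf, ∀ z ∈ upperHalf, y ≠ z → ∀ x ∈ lowerHalf,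
        |mdot (Hmap x (symGrad (fun x' => (Γfam t x' y).mulVec l) x
            - symGrad (fun x' => (Γfam 0 x' y).mulVec l) x))
          (symGrad (fun x' => (Γfam 0 x' z).mulVec m) x)|
          ≤ Cd * min (‖x‖ ^ (-(4:ℝ))) 1) :
    ∀ (l m : Fin 3 → ℝ), ∀ y ∈ upperHalf, ∀ z ∈ upperHalf, y ≠ z →
      HasDerivAt (fun t => ((Γfam t y z).mulVec m) ⬝ᵥ l)
        (∫ x in lowerHalf, mdot (Hmap x (symGrad (fun x' => (Γfam 0 x' y).mulVec l) x))
          (symGrad (fun x' => (Γfam 0 x' z).mulVec m) x)) 0 := by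
  intro l m y hy z hz hyz
  classical
  set Fm : ℝ → EuclideanSpace ℝ (Fin 3) → Matrix (Fin 3) (Fin 3) ℝ :=
    fun t => symGrad (fun x' => (Γfam t x' y).mulVec l) with hFm
  set Nz : EuclideanSpace ℝ (Fin 3) → Matrix (Fin 3) (Fin 3) ℝ :=
    symGrad (fun x' => (Γfam 0 x' z).mulVec m) with hNz
  set G : ℝ → EuclideanSpace ℝ (Fin 3) → ℝ :=
    fun t x => mdot (Hmap x (Fm t x)) (Nz x) with hGdef
  set g : ℝ → ℝ := fun t => ((Γfam t y z).mulVec m) ⬝ᵥ l with hgdef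
  have hIoo : Set.Ioo (-t0) t0 ∈ 𝓝 (0:ℝ) := Ioo_mem_nhds (by linarith) ht0
  -- measurability of G t
  have hGmeas : ∀ t, Measurable (G t) := by
    intro t
    have h1 : Measurable fun x => Hmap x (Fm t x) := by
      have heq : (fun x => Hmap x (Fm t x))
          = fun x => if x 2 < 0 then HL (Fm t x) else 0 := by
        funext x; rw [hHmap]; split <;> simp
      rw [heq]
      exact Measurable.ite measurableSet_lowerHalf
        (HL.continuous_of_finiteDimensional.measurable.comp (measurable_symGrad _))
        measurable_const
    have h2 : Measurable Nz := measurable_symGrad _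
    have heq2 : G t = fun x => ∑ i, ∑ j, (Hmap x (Fm t x)) i j * Nz x i j := rfl
    rw [heq2]
    apply Finset.measurable_sum; intro i _
    apply Finset.measurable_sum; intro j _
    exact ((measurable_pi_apply j).comp ((measurable_pi_apply i).comp h1)).mul
      ((measurable_pi_apply j).comp ((measurable_pi_apply i).comp h2))
  -- pointwise bound on the difference
  have hbd : ∀ t ∈ Set.Ioo (-t0) t0, ∀ x ∈ lowerHalf,
      |G t x - G 0 x| ≤ |Cd| * min (‖x‖ ^ (-(4:ℝ))) 1 := by
    intro t ht x hx
    have h0 := hdom t ht l m y hy z hz hyz x hx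
    have heq : G t x - G 0 x = mdot (Hmap x (Fm t x - Fm 0 x)) (Nz x) := by
      rw [map_sub, mdot_sub_left]
    rw [heq]
    refine h0.trans ?_
    have : (0:ℝ) ≤ min (‖x‖ ^ (-(4:ℝ))) 1 :=
      le_min (Real.rpow_nonneg (norm_nonneg _) _) zero_le_one
    exact mul_le_mul_of_nonneg_right (le_abs_self Cd) this
  -- integrable bound
  have hbint : Integrable (fun x => |Cd| * min (‖x‖ ^ (-(4:ℝ))) 1)
      (volume.restrict lowerHalf) :=
    ((integrable_min_rpow.const_mul |Cd|).restrict)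
  -- difference is integrable on lowerHalf
  have hDint : ∀ t ∈ Set.Ioo (-t0) t0,
      Integrable (fun x => G t x - G 0 x) (volume.restrict lowerHalf) := by
    intro t ht
    refine hbint.mono' (((hGmeas t).sub (hGmeas 0)).aestronglyMeasurable.restrict) ?_
    filter_upwards [ae_restrict_mem measurableSet_lowerHalf] with x hx
    rw [Real.norm_eq_abs]
    exact hbd t ht x hx
  -- DCT : integral of the difference tends to 0
  have hDtend : Tendsto (fun t => ∫ x in lowerHalf, (G t x - G 0 x)) (𝓝 0)
      (𝓝 (∫ _x in lowerHalf, (0:ℝ))) := by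
    refine tendsto_integral_filter_of_dominated_convergence
      (fun x => |Cd| * min (‖x‖ ^ (-(4:ℝ))) 1) ?_ ?_ hbint ?_
    · exact Eventually.of_forall fun t =>
        (((hGmeas t).sub (hGmeas 0)).aestronglyMeasurable.restrict)
    · filter_upwards [hIoo] with t ht
      filter_upwards [ae_restrict_mem measurableSet_lowerHalf] with x hx
      rw [Real.norm_eq_abs]
      exact hbd t ht x hx
    · filter_upwards [ae_restrict_mem measurableSet_lowerHalf] with x hx
      have hc := hconv l y hy x hx
      have hψ : Continuous fun M : Matrix (Fin 3) (Fin 3) ℝ => mdot (Hmap x M) (Nz x) :=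
        continuous_mdot.comp
          (((Hmap x).continuous_of_finiteDimensional).prodMk continuous_const)
      have h1 : Tendsto (fun t => G t x) (𝓝 0) (𝓝 (G 0 x)) :=
        (hψ.tendsto _).comp hc
      have := h1.sub (tendsto_const_nhds (x := G 0 x))
      simpa using this
  have hDtend0 : Tendsto (fun t => ∫ x in lowerHalf, (G t x - G 0 x)) (𝓝 0) (𝓝 0) := by
    simpa using hDtend
  -- slope identity
  have hslope : ∀ t ∈ Set.Ioo (-t0) t0, g t - g 0 = t * ∫ x in lowerHalf, G t x := by
    intro t ht
    have h0 := hdiff t ht l m y hy z hz hyz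
    have heq : ∀ x, mdot ((t • Hmap x) (Fm t x)) (Nz x) = t * G t x := by
      intro x
      rw [LinearMap.smul_apply, mdot_smul_left]
    have h1 : (∫ x in lowerHalf, mdot ((t • Hmap x) (Fm t x)) (Nz x))
        = t * ∫ x in lowerHalf, G t x := by
      simp_rw [heq]; exact integral_const_mul t _
    rw [← h1, h0]
    simp [hgdef, Matrix.sub_mulVec, sub_dotProduct]
  by_cases hI : Integrable (G 0) (volume.restrict lowerHalf)
  · -- main case
    have hGt : ∀ t ∈ Set.Ioo (-t0) t0, Integrable (G t) (volume.restrict lowerHalf) := by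
      intro t ht
      have := (hDint t ht).add hI
      refine this.congr (Eventually.of_forall fun x => ?_)
      simp only [Pi.add_apply]; ring
    have htend : Tendsto (fun t => ∫ x in lowerHalf, G t x) (𝓝 0)
        (𝓝 (∫ x in lowerHalf, G 0 x)) := by
      have heq : ∀ᶠ t in 𝓝 (0:ℝ),
          (∫ x in lowerHalf, (G t x - G 0 x)) + (∫ x in lowerHalf, G 0 x)
            = ∫ x in lowerHalf, G t x := by
        filter_upwards [hIoo] with t ht
        rw [← integral_add (hDint t ht) hI]
        congr 1; funext x; ring
      have := (hDtend0.add (tendsto_const_nhds (x := ∫ x in lowerHalf, G 0 x)))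
      rw [zero_add] at this
      exact this.congr' heq
    rw [hasDerivAt_iff_tendsto_slope]
    have heq2 : ∀ᶠ t in 𝓝[≠] (0:ℝ),
        (∫ x in lowerHalf, G t x) = slope g 0 t := by
      filter_upwards [nhdsWithin_le_nhds hIoo, self_mem_nhdsWithin] with t ht htne
      have htne' : t ≠ 0 := htne
      rw [slope_def_field, hslope t ht, sub_zero]
      exact (mul_div_cancel_left₀ _ htne').symm
    exact ((htend.mono_left nhdsWithin_le_nhds).congr' heq2)
  · -- degenerate case: the integrals are all undefined
    have hGtnot : ∀ t ∈ Set.Ioo (-t0) t0, ¬ Integrable (G t) (volume.restrict lowerHalf) := by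
      intro t ht hc
      apply hI
      have := hc.sub (hDint t ht)
      refine this.congr (Eventually.of_forall fun x => ?_)
      simp only [Pi.sub_apply]; ring
    have hzero : (∫ x in lowerHalf, G 0 x) = 0 := integral_undef hI
    have hgconst : ∀ᶠ t in 𝓝 (0:ℝ), g t = g 0 := by
      filter_upwards [hIoo] with t ht
      have h1 := hslope t ht
      rw [integral_undef (hGtnot t ht)] at h1
      linarith [h1]
    have : HasDerivAt g 0 0 := by
      exact (hasDerivAt_const (0:ℝ) (g 0)).congr_of_eventuallyEq hgconst
    rw [show (∫ x in lowerHalf, mdot (Hmap x (Fm 0 x)) (Nz x)) = 0 from hzero]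
    exact this
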